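/- Let T be a finite lattice and A = {⊥ = a₀ < a₁ < ⋯ < aₙ} a chain in T whose least element is ⊥. If aₙ < ⊤, then μ(A, ∞) = 0, where μ is the Möbius function of the poset of chains of T containing ⊥ (ordered by inclusion) with an adjoined top element ∞. -/

import Mathlib

attribute [local instance] Classical.propDecidable
attribute [local instance] Fintype.toLocallyFiniteOrder
local instance {X : Type*} [Fintype X] : Fintype (WithTop X) :=
  inferInstanceAs (Fintype (Option X))

open IncidenceAlgebra Finset

section Aux

variable {T : Type*} [Lattice T] [Fintype T] [BoundedOrder T]

private abbrev ChainP (T : Type*) [Lattice T] [Fintype T] [BoundedOrder T] :=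
  {A : Finset T // IsChain (· ≤ ·) (A : Set T) ∧ ⊥ ∈ A}

private lemma icc_coe (B C : ChainP T) :
    Finset.Icc (B : WithTop (ChainP T)) (C : WithTop (ChainP T)) =
      (Finset.Icc B C).map ⟨WithTop.some, WithTop.coe_injective⟩ := by
  ext x
  simp only [mem_Icc, mem_map, Function.Embedding.coeFn_mk]
  constructor
  · rintro ⟨h1, h2⟩
    lift x to ChainP T using (h2.trans_lt (WithTop.coe_lt_top C)).ne
    exact ⟨x, ⟨WithTop.coe_le_coe.mp h1, WithTop.coe_le_coe.mp h2⟩, rfl⟩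
  · rintro ⟨E, hE, rfl⟩
    exact ⟨WithTop.coe_le_coe.mpr hE.1, WithTop.coe_le_coe.mpr hE.2⟩

private lemma ico_coe (B C : ChainP T) :
    Finset.Ico (B : WithTop (ChainP T)) (C : WithTop (ChainP T)) =
      (Finset.Ico B C).map ⟨WithTop.some, WithTop.coe_injective⟩ := by
  ext x
  simp only [mem_Ico, mem_map, Function.Embedding.coeFn_mk]
  constructor
  · rintro ⟨h1, h2⟩
    lift x to ChainP T using (h2.trans (WithTop.coe_lt_top C)).ne
    exact ⟨x, ⟨WithTop.coe_le_coe.mp h1, WithTop.coe_lt_coe.mp h2⟩, rfl⟩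
  · rintro ⟨E, hE, rfl⟩
    exact ⟨WithTop.coe_le_coe.mpr hE.1, WithTop.coe_lt_coe.mpr hE.2⟩

private lemma ico_coe_top (B : ChainP T) :
    Finset.Ico (B : WithTop (ChainP T)) ⊤ =
      (Finset.univ.filter fun D : ChainP T => B ≤ D).map
        ⟨WithTop.some, WithTop.coe_injective⟩ := by
  ext x
  simp only [mem_Ico, mem_map, Function.Embedding.coeFn_mk, mem_filter, mem_univ, true_and]
  constructor
  · rintro ⟨h1, h2⟩
    lift x to ChainP T using h2.ne
    exact ⟨x, WithTop.coe_le_coe.mp h1, rfl⟩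
  · rintro ⟨E, hE, rfl⟩
    exact ⟨WithTop.coe_le_coe.mpr hE, WithTop.coe_lt_top E⟩

/-- Intervals `[B, C]` in the chain poset are Boolean. -/
private lemma sum_icc_sign (B C : ChainP T) (h : B ≤ C) :
    ∑ D ∈ Finset.Icc B C, (-1 : ℤ) ^ (D.1 \ B.1).card =
      ∑ V ∈ (C.1 \ B.1).powerset, (-1 : ℤ) ^ V.card := by
  have hBC : B.1 ⊆ C.1 := h
  refine Finset.sum_nbij' (fun D => D.1 \ B.1)
    (fun V => if hV : V ⊆ C.1 \ B.1 then
        ⟨B.1 ∪ V, ?_, ?_⟩ else B) ?_ ?_ ?_ ?_ ?_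
  · refine C.2.1.mono ?_
    rw [Finset.coe_subset]
    exact Finset.union_subset hBC (hV.trans (Finset.sdiff_subset))
  · exact Finset.mem_union_left _ B.2.2
  · intro D hD
    rw [mem_Icc] at hD
    rw [Finset.mem_powerset]
    exact Finset.sdiff_subset_sdiff hD.2 le_rfl
  · intro V hV
    rw [Finset.mem_powerset] at hV
    rw [dif_pos hV, mem_Icc]
    constructor
    · show B.1 ⊆ B.1 ∪ V
      exact Finset.subset_union_left
    · show B.1 ∪ V ⊆ C.1
      exact Finset.union_subset hBC (hV.trans Finset.sdiff_subset)
  · intro D hD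
    rw [mem_Icc] at hD
    rw [dif_pos (Finset.sdiff_subset_sdiff hD.2 le_rfl)]
    exact Subtype.ext (Finset.union_sdiff_of_subset hD.1)
  · intro V hV
    rw [Finset.mem_powerset] at hV
    rw [dif_pos hV]
    exact Finset.union_sdiff_cancel_left (Finset.disjoint_sdiff.mono_right hV)
  · intro D _; rfl

private lemma mu_coe_coe (B : ChainP T) :
    ∀ n (C : ChainP T), B ≤ C → (C.1 \ B.1).card = n →
      mu ℤ (B : WithTop (ChainP T)) (C : WithTop (ChainP T)) = (-1 : ℤ) ^ n := by
  intro n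
  induction n using Nat.strong_induction_on with
  | _ n ih =>
    intro C hBC hcard
    rcases eq_or_ne B C with rfl | hne
    · simp only [sdiff_self, Finset.bot_eq_empty, card_empty] at hcard
      subst hcard; simp
    · have hne' : (B : WithTop (ChainP T)) ≠ (C : WithTop (ChainP T)) :=
        fun hh => hne (WithTop.coe_injective hh)
      rw [mu_eq_neg_sum_Ico_of_ne hne', ico_coe, Finset.sum_map]
      simp only [Function.Embedding.coeFn_mk]
      have hsum : ∀ D ∈ Finset.Ico B C,
          mu ℤ (B : WithTop (ChainP T)) (D : WithTop (ChainP T)) =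
            (-1 : ℤ) ^ (D.1 \ B.1).card := by
        intro D hD
        rw [mem_Ico] at hD
        refine ih _ ?_ D hD.1 rfl
        rw [← hcard]
        refine Finset.card_lt_card ?_
        refine (Finset.ssubset_iff_of_subset
          (Finset.sdiff_subset_sdiff hD.2.le le_rfl)).mpr ?_
        have hDC' : D.1 ⊆ C.1 := hD.2.le
        have hDC : D.1 ⊂ C.1 :=
          lt_of_le_of_ne hDC' (fun hh => hD.2.ne (Subtype.ext hh))
        obtain ⟨x, hxC, hxD⟩ := Finset.exists_of_ssubset hDC
        have hxB : x ∉ B.1 := fun hh => hxD (hD.1 hh)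
        exact ⟨x, Finset.mem_sdiff.mpr ⟨hxC, hxB⟩, fun hh =>
          hxD (Finset.mem_sdiff.mp hh).1⟩
      rw [Finset.sum_congr rfl (fun D hD => hsum D hD)]
      have hicc := sum_icc_sign B C hBC
      rw [Finset.Icc_eq_cons_Ico hBC, Finset.sum_cons, hcard] at hicc
      have hzero : ∑ V ∈ (C.1 \ B.1).powerset, (-1 : ℤ) ^ V.card = 0 := by
        refine sum_powerset_neg_one_pow_card_of_nonempty ?_
        rw [Finset.sdiff_nonempty]
        exact fun hsub => hne (Subtype.ext (le_antisymm hBC hsub))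
      rw [hzero] at hicc
      linarith [hicc]

end Aux

/-- If `A` is a chain in a finite lattice `T` with least element `⊥` whose greatest
element is `< ⊤`, then `μ(A, ∞) = 0` in the poset of chains of `T` containing `⊥`
(ordered by inclusion) with an adjoined top element `∞`. -/
theorem mobius_vanishes_of_top_not_mem
    {T : Type*} [Lattice T] [Fintype T] [BoundedOrder T]
    (A : {A : Finset T // IsChain (· ≤ ·) (A : Set T) ∧ ⊥ ∈ A})
    (hA : ∀ x ∈ (A : Finset T), x < ⊤) :
    mu ℤ (A : WithTop {A : Finset T // IsChain (· ≤ ·) (A : Set T) ∧ ⊥ ∈ A}) ⊤ = 0 := by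
  have htop : (⊤ : T) ∉ A.1 := fun h => lt_irrefl _ (hA ⊤ h)
  have hbot : (⊥ : T) < ⊤ := hA ⊥ A.2.2
  have hne : (A : WithTop (ChainP T)) ≠ ⊤ := WithTop.coe_ne_top
  rw [mu_eq_neg_sum_Ico_of_ne hne, ico_coe_top, Finset.sum_map]
  simp only [Function.Embedding.coeFn_mk]
  rw [Finset.sum_congr rfl (fun B hB => mu_coe_coe A _ B
    (Finset.mem_filter.mp hB).2 rfl)]
  rw [neg_eq_zero]
  -- involution: toggle ⊤ membership
  refine Finset.sum_involution
    (fun B _ => if hV : (⊤ : T) ∈ B.1 then ⟨B.1.erase ⊤, B.2.1.mono (by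
        rw [Finset.coe_subset]; exact Finset.erase_subset _ _),
        Finset.mem_erase.mpr ⟨hbot.ne, B.2.2⟩⟩
      else ⟨insert ⊤ B.1, by
        rw [Finset.coe_insert]
        exact B.2.1.insert (fun b _ _ => Or.inr le_top),
        Finset.mem_insert_of_mem B.2.2⟩)
    ?_ ?_ ?_ ?_
  · intro B hB
    by_cases hV : (⊤ : T) ∈ B.1
    · rw [dif_pos hV]
      have hkey : (B.1 \ A.1).card = ((B.1.erase ⊤) \ A.1).card + 1 := by
        have h1 : (B.1.erase ⊤) \ A.1 = (B.1 \ A.1).erase ⊤ := by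
          ext x; simp only [Finset.mem_erase, Finset.mem_sdiff]; tauto
        have h2 : (⊤ : T) ∈ B.1 \ A.1 := Finset.mem_sdiff.mpr ⟨hV, htop⟩
        rw [h1, Finset.card_erase_of_mem h2]
        have := Finset.card_pos.mpr ⟨_, h2⟩
        omega
      rw [hkey, pow_succ]
      ring
    · rw [dif_neg hV]
      have hkey : ((insert ⊤ B.1) \ A.1).card = (B.1 \ A.1).card + 1 := by
        have h1 : (insert ⊤ B.1) \ A.1 = insert ⊤ (B.1 \ A.1) := by
          ext x; simp only [Finset.mem_insert, Finset.mem_sdiff]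
          constructor
          · rintro ⟨(rfl | hx), hxA⟩
            · exact Or.inl rfl
            · exact Or.inr ⟨hx, hxA⟩
          · rintro (rfl | ⟨hx, hxA⟩)
            · exact ⟨Or.inl rfl, htop⟩
            · exact ⟨Or.inr hx, hxA⟩
        rw [h1, Finset.card_insert_of_notMem (fun hh => hV (Finset.mem_sdiff.mp hh).1)]
      rw [hkey, pow_succ]
      ring
  · intro B hB hf
    by_cases hV : (⊤ : T) ∈ B.1
    · rw [dif_pos hV]
      intro hh
      have h2 : (↑B : Finset T).erase ⊤ = (B.1 : Finset T) := congrArg Subtype.val hh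
      exact Finset.notMem_erase _ _ (h2.symm ▸ hV)
    · rw [dif_neg hV]
      intro hh
      have h2 : insert ⊤ (B.1 : Finset T) = (B.1 : Finset T) := congrArg Subtype.val hh
      exact hV (h2 ▸ Finset.mem_insert_self ⊤ B.1)
  · intro B hB
    rw [Finset.mem_filter] at hB ⊢
    refine ⟨Finset.mem_univ _, ?_⟩
    by_cases hV : (⊤ : T) ∈ B.1
    · rw [dif_pos hV]
      show A.1 ⊆ B.1.erase ⊤
      exact Finset.subset_erase.mpr ⟨hB.2, htop⟩
    · rw [dif_neg hV]
      show A.1 ⊆ insert ⊤ B.1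
      exact (show A.1 ⊆ B.1 from hB.2).trans (Finset.subset_insert _ _)
  · intro B hB
    by_cases hV : (⊤ : T) ∈ B.1
    · rw [dif_pos hV]
      dsimp only
      rw [dif_neg (Finset.notMem_erase _ _)]
      exact Subtype.ext (Finset.insert_erase hV)
    · rw [dif_neg hV]
      dsimp only
      rw [dif_pos (Finset.mem_insert_self _ _)]
      exact Subtype.ext (Finset.erase_insert hV)
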